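/- (Key combinatorial step of the Cantor example.) With S_k = { Σ_{j=1}^k a_j 4^{-j} : a_j ∈ {0,2} }, A_k = ∪_{x∈S_k}[x, x+4^{-k}), and f_j = 2^{3/2}·2^j·1_{A_j}: for every k ≥ 1, every x ∈ A_{k−1} \ A_k, and every j ≥ k, one has ∫_{B_{2·4^{-k}}(x)} f_j ≥ 2^{3/2}·2^{-k}, hence the average of f_j over B_{2·4^{-k}}(x) is at least (2·4^{-k})^{-1/2}. -/
import Mathlib


open MeasureTheory Metric ENNReal

noncomputable def ballAvg1 (f : ℝ → ℝ≥0∞) (ρ x : ℝ) : ℝ≥0∞ :=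
  (∫⁻ y in Metric.ball x ρ, f y) / volume (Metric.ball x ρ)

noncomputable def scaleOp1 (α : ℝ) (f : ℝ → ℝ≥0∞) (x : ℝ) : ℝ≥0∞ :=
  sInf {s : ℝ≥0∞ | ∃ ρ : ℝ, 0 < ρ ∧ s = ENNReal.ofReal ρ ∧
    ENNReal.ofReal ρ ^ (-α) < ballAvg1 f ρ x}

noncomputable def avgOp1 (α : ℝ) (f : ℝ → ℝ≥0∞) (x : ℝ) : ℝ≥0∞ :=
  scaleOp1 α f x ^ (-α)

/-- `S_k`: fractions whose base-4 expansion up to digit `k` uses only digits 0 and 2. -/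
def cantorS (k : ℕ) : Set ℝ :=
  {x : ℝ | ∃ a : ℕ → ℝ, (∀ j, a j = 0 ∨ a j = 2) ∧
    x = ∑ j ∈ Finset.range k, a j * (4 : ℝ) ^ (-(j : ℤ) - 1)}

/-- `A_k = ∪_{x ∈ S_k} [x, x + 4^{-k})`. -/
def cantorA (k : ℕ) : Set ℝ :=
  ⋃ x ∈ cantorS k, Set.Ico x (x + (4 : ℝ) ^ (-(k : ℤ)))

/-- `f_j = 2^{3/2} · 2^j · 1_{A_j}`. -/
noncomputable def cantorF (j : ℕ) : ℝ → ℝ≥0∞ :=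
  (cantorA j).indicator fun _ => ENNReal.ofReal ((2 : ℝ) ^ ((3 : ℝ) / 2) * 2 ^ j)


lemma mem_cantorS_add (m : ℕ) (y b : ℝ) (hb : b = 0 ∨ b = 2) (hy : y ∈ cantorS m) :
    y + b * (4:ℝ) ^ (-(m:ℤ) - 1) ∈ cantorS (m+1) := by
  obtain ⟨a, ha, rfl⟩ := hy
  refine ⟨fun i => if i = m then b else a i, fun i => by by_cases h : i = m <;> simp [h, hb, ha i], ?_⟩
  rw [Finset.sum_range_succ]
  simp only [if_pos rfl]
  congr 1
  refine Finset.sum_congr rfl fun i hi => ?_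
  rw [if_neg (Finset.mem_range.mp hi).ne]

lemma cantorS_subset_succ (m : ℕ) :
    cantorS (m+1) ⊆ cantorS m ∪ (fun y => y + 2 * (4:ℝ) ^ (-(m:ℤ) - 1)) '' cantorS m := by
  rintro x ⟨a, ha, rfl⟩
  rw [Finset.sum_range_succ]
  have hs : (∑ j ∈ Finset.range m, a j * (4 : ℝ) ^ (-(j : ℤ) - 1)) ∈ cantorS m := ⟨a, ha, rfl⟩
  rcases ha m with h | h
  · left; simpa [h] using hs
  · right; exact ⟨_, hs, by simp [h]⟩

lemma cantorS_finite (k : ℕ) : (cantorS k).Finite := by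
  induction k with
  | zero =>
    refine Set.Finite.subset (Set.finite_singleton 0) ?_
    rintro x ⟨a, ha, rfl⟩; simp
  | succ m ih => exact ((ih.union (ih.image _)).subset (cantorS_subset_succ m))

lemma cantorA_meas (k : ℕ) : MeasurableSet (cantorA k) :=
  (cantorS_finite k).measurableSet_biUnion fun _ _ => measurableSet_Ico

lemma Ico_subset_cantorA {k : ℕ} {y : ℝ} (hy : y ∈ cantorS k) :
    Set.Ico y (y + (4:ℝ) ^ (-(k:ℤ))) ⊆ cantorA k :=
  fun _ hz => Set.mem_biUnion hy hz

lemma cantorA_measure_ge (n : ℕ) : ∀ (m : ℕ) (y : ℝ), y ∈ cantorS m →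
    ENNReal.ofReal ((2:ℝ) ^ (-(n:ℤ)) * (4:ℝ) ^ (-(m:ℤ))) ≤
      volume (cantorA (m + n) ∩ Set.Ico y (y + (4:ℝ) ^ (-(m:ℤ)))) := by
  induction n with
  | zero =>
    intro m y hy
    rw [Nat.add_zero, Set.inter_eq_self_of_subset_right (Ico_subset_cantorA hy),
      Real.volume_Ico]
    simp
  | succ n ih =>
    intro m y hy
    set q : ℝ := (4:ℝ) ^ (-(m:ℤ) - 1) with hqdef
    have hqpos : 0 < q := by positivity
    have hq : (4:ℝ) ^ (-((m+1:ℕ):ℤ)) = q := by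
      rw [hqdef]; congr 1; push_cast; ring
    have h4q : (4:ℝ) ^ (-(m:ℤ)) = 4 * q := by
      rw [hqdef, show -(m:ℤ) = (-(m:ℤ) - 1) + 1 by ring, zpow_add₀ (by norm_num : (4:ℝ) ≠ 0)]
      ring
    have h1 : y ∈ cantorS (m+1) := by
      have := mem_cantorS_add m y 0 (Or.inl rfl) hy
      simpa using this
    have h2 : y + 2 * q ∈ cantorS (m+1) := mem_cantorS_add m y 2 (Or.inr rfl) hy
    have I1 := ih (m+1) y h1
    have I2 := ih (m+1) (y + 2 * q) h2
    rw [hq] at I1 I2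
    have hJ : m + 1 + n = m + (n + 1) := by omega
    rw [hJ] at I1 I2
    set J := m + (n + 1)
    set s1 := cantorA J ∩ Set.Ico y (y + q)
    set s2 := cantorA J ∩ Set.Ico (y + 2 * q) (y + 2 * q + q)
    have hdisj : Disjoint s1 s2 := by
      apply Set.disjoint_left.mpr
      rintro z ⟨_, h1z⟩ ⟨_, h2z⟩
      simp only [Set.mem_Ico] at h1z h2z
      linarith [h1z.2, h2z.1]
    have hsub : s1 ∪ s2 ⊆ cantorA J ∩ Set.Ico y (y + (4:ℝ) ^ (-(m:ℤ))) := by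
      rw [h4q]
      rintro z (⟨hz1, hz2⟩ | ⟨hz1, hz2⟩) <;> simp only [Set.mem_Ico] at hz2 <;>
        exact ⟨hz1, ⟨by linarith [hz2.1], by linarith [hz2.2]⟩⟩
    calc ENNReal.ofReal ((2:ℝ) ^ (-((n+1:ℕ):ℤ)) * (4:ℝ) ^ (-(m:ℤ)))
        ≤ ENNReal.ofReal ((2:ℝ) ^ (-(n:ℤ)) * q) + ENNReal.ofReal ((2:ℝ) ^ (-(n:ℤ)) * q) := by
          rw [← ENNReal.ofReal_add (by positivity) (by positivity)]
          apply ENNReal.ofReal_le_ofReal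
          have : (2:ℝ) ^ (-((n+1:ℕ):ℤ)) * 4 = 2 * (2:ℝ) ^ (-(n:ℤ)) := by
            rw [show -((n+1:ℕ):ℤ) = -(n:ℤ) + (-1) by push_cast; ring,
              zpow_add₀ (by norm_num : (2:ℝ) ≠ 0)]
            norm_num; ring
          rw [h4q]
          nlinarith [hqpos, this]
      _ ≤ volume s1 + volume s2 := add_le_add I1 I2
      _ = volume (s1 ∪ s2) := (measure_union hdisj ((cantorA_meas J).inter measurableSet_Ico)).symm
      _ ≤ volume (cantorA J ∩ Set.Ico y (y + (4:ℝ) ^ (-(m:ℤ)))) := measure_mono hsub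

lemma exists_good_interval {m : ℕ} {x : ℝ} (hx : x ∈ cantorA m \ cantorA (m+1)) :
    ∃ y ∈ cantorS (m+1), Set.Ico y (y + (4:ℝ) ^ (-((m+1:ℕ):ℤ))) ⊆
      Metric.ball x (2 * (4:ℝ) ^ (-((m+1:ℕ):ℤ))) := by
  obtain ⟨hxA, hxN⟩ := hx
  rw [cantorA, Set.mem_iUnion₂] at hxA
  obtain ⟨x0, hx0S, hx0⟩ := hxA
  set q : ℝ := (4:ℝ) ^ (-((m+1:ℕ):ℤ)) with hqdef
  have hq' : q = (4:ℝ) ^ (-(m:ℤ) - 1) := by rw [hqdef]; congr 1; push_cast; ring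
  have hqpos : 0 < q := by rw [hqdef]; positivity
  have h4q : (4:ℝ) ^ (-(m:ℤ)) = 4 * q := by
    rw [hq', show -(m:ℤ) = (-(m:ℤ) - 1) + 1 by ring, zpow_add₀ (by norm_num : (4:ℝ) ≠ 0)]
    ring
  have h1 : x0 ∈ cantorS (m+1) := by
    have := mem_cantorS_add m x0 0 (Or.inl rfl) hx0S; simpa using this
  have h2 : x0 + 2 * q ∈ cantorS (m+1) := by
    have := mem_cantorS_add m x0 2 (Or.inr rfl) hx0S; rwa [← hq'] at this
  have not1 : x ∉ Set.Ico x0 (x0 + q) := fun h => hxN (Ico_subset_cantorA h1 h)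
  have not2 : x ∉ Set.Ico (x0 + 2*q) (x0 + 2*q + q) := fun h => hxN (Ico_subset_cantorA h2 h)
  simp only [Set.mem_Ico, not_and, not_lt] at not1 not2
  obtain ⟨hxl, hxr⟩ := hx0
  rw [h4q] at hxr
  have hx1 : x0 + q ≤ x := not1 hxl
  by_cases hcase : x < x0 + 2*q
  · refine ⟨x0, h1, fun z hz => ?_⟩
    obtain ⟨hz1, hz2⟩ := hz
    rw [Metric.mem_ball, Real.dist_eq, abs_lt]
    constructor <;> linarith
  · push_neg at hcase
    have hx3 : x0 + 2*q + q ≤ x := not2 hcase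
    refine ⟨x0 + 2*q, h2, fun z hz => ?_⟩
    obtain ⟨hz1, hz2⟩ := hz
    rw [Metric.mem_ball, Real.dist_eq, abs_lt]
    constructor <;> linarith

lemma integral_lower {k j : ℕ} (hj : k ≤ j) {y : ℝ} (hy : y ∈ cantorS k) :
    ENNReal.ofReal ((2 : ℝ) ^ ((3 : ℝ) / 2) * (2 : ℝ) ^ (-(k : ℤ))) ≤
      ∫⁻ z in Set.Ico y (y + (4:ℝ) ^ (-(k:ℤ))), cantorF j z := by
  have hmeas := cantorA_meas j
  have heq : ∫⁻ z in Set.Ico y (y + (4:ℝ) ^ (-(k:ℤ))), cantorF j z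
      = ENNReal.ofReal ((2 : ℝ) ^ ((3 : ℝ) / 2) * 2 ^ j) *
        volume (cantorA j ∩ Set.Ico y (y + (4:ℝ) ^ (-(k:ℤ)))) := by
    rw [cantorF, lintegral_indicator hmeas, setLIntegral_const,
      Measure.restrict_apply hmeas]
  rw [heq]
  set n := j - k with hn
  have hjkn : k + n = j := by omega
  have hvol := cantorA_measure_ge n k y hy
  rw [hjkn] at hvol
  calc ENNReal.ofReal ((2 : ℝ) ^ ((3 : ℝ) / 2) * (2 : ℝ) ^ (-(k : ℤ)))
      ≤ ENNReal.ofReal ((2 : ℝ) ^ ((3 : ℝ) / 2) * 2 ^ j) *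
          ENNReal.ofReal ((2:ℝ) ^ (-(n:ℤ)) * (4:ℝ) ^ (-(k:ℤ))) := by
        rw [← ENNReal.ofReal_mul (by positivity)]
        apply ENNReal.ofReal_le_ofReal
        have key : (2:ℝ)^j * ((2:ℝ) ^ (-(n:ℤ)) * (4:ℝ) ^ (-(k:ℤ))) = (2:ℝ) ^ (-(k:ℤ)) := by
          rw [show (4:ℝ) = (2:ℝ)^(2:ℤ) by norm_num, ← zpow_mul,
            ← zpow_natCast (2:ℝ) j, ← zpow_add₀ (by norm_num : (2:ℝ) ≠ 0),
            ← zpow_add₀ (by norm_num : (2:ℝ) ≠ 0)]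
          congr 1
          omega
        rw [mul_assoc, key]
      _ ≤ _ := mul_le_mul_right hvol _

lemma rcalc (k : ℕ) :
    ((2:ℝ) * (4:ℝ) ^ (-(k:ℤ))) ^ (-(1:ℝ)/2) * (2 * (2 * (4:ℝ) ^ (-(k:ℤ)))) =
      (2:ℝ) ^ ((3:ℝ)/2) * (2:ℝ) ^ (-(k:ℤ)) := by
  have two_pos : (0:ℝ) < 2 := by norm_num
  have hc : ∀ c : ℝ, 2 * (2:ℝ) ^ c = (2:ℝ) ^ (1 + c) := fun c => by
    rw [Real.rpow_add two_pos, Real.rpow_one]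
  have h4 : (4:ℝ) ^ (-(k:ℤ)) = (2:ℝ) ^ ((-(2*(k:ℝ))) : ℝ) := by
    rw [show (4:ℝ) = (2:ℝ)^(2:ℤ) by norm_num, ← zpow_mul, ← Real.rpow_intCast 2]
    push_cast; ring_nf
  have h2k : (2:ℝ) ^ (-(k:ℤ)) = (2:ℝ) ^ ((-(k:ℝ)) : ℝ) := by
    rw [← Real.rpow_intCast 2]; push_cast; ring_nf
  rw [h4, h2k, hc, hc, ← Real.rpow_mul (le_of_lt two_pos), ← Real.rpow_add two_pos,
    ← Real.rpow_add two_pos]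
  congr 1
  ring

theorem stmt18 (k j : ℕ) (hk : 1 ≤ k) (hj : k ≤ j) (x : ℝ)
    (hx : x ∈ cantorA (k - 1) \ cantorA k) :
    (ENNReal.ofReal ((2 : ℝ) ^ ((3 : ℝ) / 2) * (2 : ℝ) ^ (-(k : ℤ))) ≤
      ∫⁻ y in Metric.ball x (2 * (4 : ℝ) ^ (-(k : ℤ))), cantorF j y) ∧
    (ENNReal.ofReal ((2 * (4 : ℝ) ^ (-(k : ℤ))) ^ (-(1 : ℝ) / 2)) ≤
      ballAvg1 (cantorF j) (2 * (4 : ℝ) ^ (-(k : ℤ))) x) := by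
  obtain ⟨m, rfl⟩ : ∃ m, k = m + 1 := ⟨k - 1, by omega⟩
  have hx' : x ∈ cantorA m \ cantorA (m+1) := by simpa using hx
  obtain ⟨y, hyS, hysub⟩ := exists_good_interval hx'
  have part1 : ENNReal.ofReal ((2 : ℝ) ^ ((3 : ℝ) / 2) * (2 : ℝ) ^ (-((m+1:ℕ) : ℤ))) ≤
      ∫⁻ z in Metric.ball x (2 * (4 : ℝ) ^ (-((m+1:ℕ) : ℤ))), cantorF j z :=
    le_trans (integral_lower hj hyS)
      (lintegral_mono' (Measure.restrict_mono hysub le_rfl) le_rfl)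
  refine ⟨part1, ?_⟩
  rw [ballAvg1]
  set ρ : ℝ := 2 * (4:ℝ) ^ (-((m+1:ℕ):ℤ)) with hρ
  have hρpos : 0 < ρ := by rw [hρ]; positivity
  have hvol : volume (Metric.ball x ρ) = ENNReal.ofReal (2 * ρ) := Real.volume_ball x ρ
  rw [hvol, ENNReal.le_div_iff_mul_le
    (Or.inl (ENNReal.ofReal_pos.mpr (by positivity)).ne') (Or.inl ENNReal.ofReal_ne_top)]
  rw [← ENNReal.ofReal_mul (by positivity)]
  calc ENNReal.ofReal (ρ ^ (-(1:ℝ)/2) * (2 * ρ))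
      = ENNReal.ofReal ((2 : ℝ) ^ ((3 : ℝ) / 2) * (2 : ℝ) ^ (-((m+1:ℕ) : ℤ))) := by
        rw [hρ]; rw [rcalc (m+1)]
    _ ≤ _ := part1
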